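/- arXiv:0910.3607 — 6 statements merged into one kernel-verified Lean document; each statement's English description precedes it below -/
import Mathlib

section
/- With notation as above (pairwise linearly independent a_i ∈ K^2, α_{ij} = det(a_i,a_j), g_{i,j,k} = α_{jk} f_i + α_{ki} f_j + α_{ij} f_k), every trinomial g_{i,j,k} with 0 ≤ i < j < k ≤ r lies in the ideal generated by the consecutive trinomials g_{s,s+1,s+2} for 0 ≤ s ≤ r−2. -/
/-- Every trinomial `g i j k` with `i < j < k ≤ r` lies in the ideal generated by the
consecutive trinomials `g s (s+1) (s+2)`, `s ≤ r - 2`. -/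
theorem stmt_1 {K : Type*} [Field K] {A : Type*} [CommRing A] [Algebra K A]
    (r : ℕ) (a : ℕ → K × K)
    (hind : ∀ i k : ℕ, i ≤ r → k ≤ r → i ≠ k →
      (a i).1 * (a k).2 - (a k).1 * (a i).2 ≠ 0)
    (f : ℕ → A)
    (α : ℕ → ℕ → K)
    (hα : ∀ i j, α i j = (a i).1 * (a j).2 - (a j).1 * (a i).2)
    (g : ℕ → ℕ → ℕ → A)
    (hg : ∀ i j k, g i j k =
      algebraMap K A (α j k) * f i + algebraMap K A (α k i) * f j +
        algebraMap K A (α i j) * f k)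
    (i j k : ℕ) (hij : i < j) (hjk : j < k) (hk : k ≤ r) :
    g i j k ∈ Ideal.span {x : A | ∃ s : ℕ, s ≤ r - 2 ∧ x = g s (s + 1) (s + 2)} := by
  set I : Ideal A := Ideal.span {x : A | ∃ s : ℕ, s ≤ r - 2 ∧ x = g s (s + 1) (s + 2)}
    with hI
  have hr : 2 ≤ r := by omega
  -- the key three-term identity (a consequence of the Plücker relation)
  have key : ∀ p q u v w : ℕ, algebraMap K A (α p q) * g u v w =
      algebraMap K A (α v w) * g p q u + algebraMap K A (α w u) * g p q v +
        algebraMap K A (α u v) * g p q w := by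
    intro p q u v w
    simp only [hg, hα, map_sub, map_mul]
    ring
  -- dividing by a nonzero scalar
  have div : ∀ (c : K) (x : A), c ≠ 0 → algebraMap K A c * x ∈ I → x ∈ I := by
    intro c x hc hx
    have hx' : x = algebraMap K A c⁻¹ * (algebraMap K A c * x) := by
      rw [← mul_assoc, ← map_mul, inv_mul_cancel₀ hc, map_one, one_mul]
    rw [hx']
    exact Ideal.mul_mem_left _ _ hx
  have h01 : α 0 1 ≠ 0 := by
    rw [hα]; exact hind 0 1 (by omega) (by omega) (by omega)
  have hzero : ∀ m, g 0 m m = 0 ∧ g m 0 m = 0 ∧ g m m 0 = 0 := by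
    intro m
    refine ⟨?_, ?_, ?_⟩ <;> · simp only [hg, hα, map_sub, map_mul]; ring
  have hz010 : g 0 1 0 = 0 := by
    simp only [hg, hα, map_sub, map_mul]; ring
  have hz011 : g 0 1 1 = 0 := by
    simp only [hg, hα, map_sub, map_mul]; ring
  -- main induction: g 0 1 m ∈ I for all m ≤ r
  have main : ∀ m, m ≤ r → g 0 1 m ∈ I := by
    intro m
    induction m using Nat.strong_induction_on with
    | _ m ih =>
      intro hm
      rcases Nat.lt_or_ge m 3 with h3 | h3
      · interval_cases m
        · rw [hz010]; exact zero_mem I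
        · rw [hz011]; exact zero_mem I
        · exact Ideal.subset_span ⟨0, by omega, by norm_num⟩
      · have hpq : α (m - 2) (m - 1) ≠ 0 := by
          rw [hα]; exact hind _ _ (by omega) (by omega) (by omega)
        have hA : g (m - 2) (m - 1) 0 ∈ I := by
          apply div _ _ h01
          rw [key 0 1 (m - 2) (m - 1) 0]
          refine add_mem (add_mem ?_ ?_) ?_
          · exact Ideal.mul_mem_left _ _ (ih (m - 2) (by omega) (by omega))
          · exact Ideal.mul_mem_left _ _ (ih (m - 1) (by omega) (by omega))
          · rw [hz010, mul_zero]; exact zero_mem I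
        have hB : g (m - 2) (m - 1) 1 ∈ I := by
          apply div _ _ h01
          rw [key 0 1 (m - 2) (m - 1) 1]
          refine add_mem (add_mem ?_ ?_) ?_
          · exact Ideal.mul_mem_left _ _ (ih (m - 2) (by omega) (by omega))
          · exact Ideal.mul_mem_left _ _ (ih (m - 1) (by omega) (by omega))
          · rw [hz011, mul_zero]; exact zero_mem I
        have hC : g (m - 2) (m - 1) m ∈ I := by
          apply Ideal.subset_span
          exact ⟨m - 2, by omega, by congr 1 <;> omega⟩
        apply div _ _ hpq
        rw [key (m - 2) (m - 1) 0 1 m]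
        exact add_mem (add_mem (Ideal.mul_mem_left _ _ hA) (Ideal.mul_mem_left _ _ hB))
          (Ideal.mul_mem_left _ _ hC)
  apply div _ _ h01
  rw [key 0 1 i j k]
  exact add_mem (add_mem (Ideal.mul_mem_left _ _ (main i (by omega)))
    (Ideal.mul_mem_left _ _ (main j (by omega)))) (Ideal.mul_mem_left _ _ (main k hk))
end

section
/- With notation as above, if at a point z the values f_i(z) = f_j(z) = 0 for two indices i < j, and all trinomials g_{s,s+1,s+2}(z) = 0, then f_k(z) = 0 for all 0 ≤ k ≤ r. -/
/-- If at a point the values `f i` and `f j` vanish for two indices `i < j ≤ r`, and all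
consecutive trinomial relations vanish, then all `f k`, `k ≤ r`, vanish. -/
theorem stmt_2 {K : Type*} [Field K]
    (r : ℕ) (a : ℕ → K × K)
    (hind : ∀ i k : ℕ, i ≤ r → k ≤ r → i ≠ k →
      (a i).1 * (a k).2 - (a k).1 * (a i).2 ≠ 0)
    (α : ℕ → ℕ → K)
    (hα : ∀ i j, α i j = (a i).1 * (a j).2 - (a j).1 * (a i).2)
    (f : ℕ → K)
    (hg : ∀ s : ℕ, s ≤ r - 2 →
      α (s + 1) (s + 2) * f s + α (s + 2) s * f (s + 1) + α s (s + 1) * f (s + 2) = 0)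
    (i j : ℕ) (hij : i < j) (hj : j ≤ r) (hfi : f i = 0) (hfj : f j = 0) :
    ∀ k : ℕ, k ≤ r → f k = 0 := by
  have hr1 : 1 ≤ r := le_trans (Nat.one_le_iff_ne_zero.mpr (by omega)) hj
  have hd : (a 0).1 * (a 1).2 - (a 1).1 * (a 0).2 ≠ 0 :=
    hind 0 1 (by omega) hr1 (by omega)
  set d : K := (a 0).1 * (a 1).2 - (a 1).1 * (a 0).2 with hdd
  set lam : K := (f 0 * (a 1).2 - f 1 * (a 0).2) / d with hlam
  set mu : K := ((a 0).1 * f 1 - (a 1).1 * f 0) / d with hmu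
  -- every f k, k ≤ r, is lam * (a k).1 + mu * (a k).2
  have key : ∀ k : ℕ, k ≤ r → f k = lam * (a k).1 + mu * (a k).2 := by
    intro k
    induction k using Nat.strong_induction_on with
    | _ k ih =>
      match k with
      | 0 =>
        intro _
        rw [hlam, hmu]
        field_simp
        ring
      | 1 =>
        intro _
        rw [hlam, hmu]
        field_simp
        ring
      | (s + 2) =>
        intro hk
        have h1 := ih s (by omega) (by omega)
        have h2 := ih (s + 1) (by omega) (by omega)
        have hrec := hg s (by omega)
        rw [hα, hα, hα, h1, h2] at hrec
        have hne : (a s).1 * (a (s+1)).2 - (a (s+1)).1 * (a s).2 ≠ 0 :=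
          hind s (s+1) (by omega) (by omega) (by omega)
        have : ((a s).1 * (a (s+1)).2 - (a (s+1)).1 * (a s).2) *
            (f (s+2) - (lam * (a (s+2)).1 + mu * (a (s+2)).2)) = 0 := by
          linear_combination hrec
        rcases mul_eq_zero.mp this with h | h
        · exact absurd h hne
        · linear_combination h
  have hi : lam * (a i).1 + mu * (a i).2 = 0 := by
    rw [← key i (by omega), hfi]
  have hjj : lam * (a j).1 + mu * (a j).2 = 0 := by
    rw [← key j hj, hfj]
  have hdij : (a i).1 * (a j).2 - (a j).1 * (a i).2 ≠ 0 :=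
    hind i j (by omega) hj (by omega)
  have hlam0 : lam = 0 := by
    have : lam * ((a i).1 * (a j).2 - (a j).1 * (a i).2) = 0 := by
      linear_combination (a j).2 * hi - (a i).2 * hjj
    rcases mul_eq_zero.mp this with h | h
    · exact h
    · exact absurd h hdij
  have hmu0 : mu = 0 := by
    have : mu * ((a i).1 * (a j).2 - (a j).1 * (a i).2) = 0 := by
      linear_combination (a i).1 * hjj - (a j).1 * hi
    rcases mul_eq_zero.mp this with h | h
    · exact h
    · exact absurd h hdij
  intro k hk
  rw [key k hk, hlam0, hmu0]
  ring
end

section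
/- With notation as above, the ideal of relations satisfies ⟨g_{s,s+1,s+2} : 0 ≤ s ≤ r−2⟩ = ⟨g_{0,s,s+1} : 1 ≤ s ≤ r−1⟩ as ideals. -/
/-- The ideal of consecutive trinomials `g s (s+1) (s+2)`, `s ≤ r-2`, coincides with the
ideal of the trinomials `g 0 s (s+1)`, `1 ≤ s ≤ r-1`. -/
theorem stmt_3 {K : Type*} [Field K] {A : Type*} [CommRing A] [Algebra K A]
    (r : ℕ) (hr : 2 ≤ r) (a : ℕ → K × K)
    (hind : ∀ i k : ℕ, i ≤ r → k ≤ r → i ≠ k →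
      (a i).1 * (a k).2 - (a k).1 * (a i).2 ≠ 0)
    (f : ℕ → A)
    (α : ℕ → ℕ → K)
    (hα : ∀ i j, α i j = (a i).1 * (a j).2 - (a j).1 * (a i).2)
    (g : ℕ → ℕ → ℕ → A)
    (hg : ∀ i j k, g i j k =
      algebraMap K A (α j k) * f i + algebraMap K A (α k i) * f j +
        algebraMap K A (α i j) * f k) :
    Ideal.span {x : A | ∃ s : ℕ, s ≤ r - 2 ∧ x = g s (s + 1) (s + 2)} =
      Ideal.span {x : A | ∃ s : ℕ, 1 ≤ s ∧ s ≤ r - 1 ∧ x = g 0 s (s + 1)} := by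
  have hID : ∀ s : ℕ,
      algebraMap K A (α 0 (s+1)) * g s (s+1) (s+2) +
        algebraMap K A (α (s+1) s) * g 0 (s+1) (s+2)
        = algebraMap K A (α (s+2) (s+1)) * g 0 s (s+1) := by
    intro s
    simp only [hg, hα, map_sub, map_mul, map_add]
    ring
  have hunit : ∀ c : K, c ≠ 0 →
      algebraMap K A c⁻¹ * algebraMap K A c = 1 := by
    intro c hc; rw [← map_mul, inv_mul_cancel₀ hc, map_one]
  -- membership of the second family in the first ideal, by induction
  have hmem : ∀ s : ℕ, 1 ≤ s → s ≤ r - 1 →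
      g 0 s (s+1) ∈ Ideal.span {x : A | ∃ s : ℕ, s ≤ r - 2 ∧ x = g s (s + 1) (s + 2)} := by
    intro s
    induction s with
    | zero => intro h; omega
    | succ n ih =>
      intro _ hle
      rcases Nat.eq_zero_or_pos n with h0 | hn
      · subst h0
        exact Ideal.subset_span ⟨0, by omega, rfl⟩
      · have hnr : n ≤ r - 2 := by omega
        have ihm := ih hn (by omega)
        have hc : α (n+1) n ≠ 0 := by
          rw [hα]; exact hind (n+1) n (by omega) (by omega) (by omega)
        have key := hID n
        have heq : g 0 (n+1) (n+2)
            = algebraMap K A (α (n+1) n)⁻¹ *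
                (algebraMap K A (α (n+2) (n+1)) * g 0 n (n+1)
                  - algebraMap K A (α 0 (n+1)) * g n (n+1) (n+2)) := by
          have h1 := hunit _ hc
          calc g 0 (n+1) (n+2)
              = (algebraMap K A (α (n+1) n)⁻¹ * algebraMap K A (α (n+1) n)) *
                  g 0 (n+1) (n+2) := by rw [h1, one_mul]
            _ = algebraMap K A (α (n+1) n)⁻¹ *
                  (algebraMap K A (α (n+1) n) * g 0 (n+1) (n+2)) := by ring
            _ = _ := by rw [show algebraMap K A (α (n+1) n) * g 0 (n+1) (n+2)
                  = algebraMap K A (α (n+2) (n+1)) * g 0 n (n+1)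
                    - algebraMap K A (α 0 (n+1)) * g n (n+1) (n+2) from by
                  linear_combination key]
        rw [heq]
        exact Ideal.mul_mem_left _ _ (sub_mem
          (Ideal.mul_mem_left _ _ ihm)
          (Ideal.mul_mem_left _ _ (Ideal.subset_span ⟨n, hnr, rfl⟩)))
  apply le_antisymm
  · rw [Ideal.span_le]
    rintro x ⟨s, hs, rfl⟩
    rcases Nat.eq_zero_or_pos s with h0 | h1
    · subst h0
      exact Ideal.subset_span ⟨1, le_refl 1, by omega, rfl⟩
    · have hc : α 0 (s+1) ≠ 0 := by
        rw [hα]; exact hind 0 (s+1) (by omega) (by omega) (by omega)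
      have key := hID s
      have heq : g s (s+1) (s+2)
          = algebraMap K A (α 0 (s+1))⁻¹ *
              (algebraMap K A (α (s+2) (s+1)) * g 0 s (s+1)
                - algebraMap K A (α (s+1) s) * g 0 (s+1) (s+2)) := by
        have h1 := hunit _ hc
        calc g s (s+1) (s+2)
            = (algebraMap K A (α 0 (s+1))⁻¹ * algebraMap K A (α 0 (s+1))) *
                g s (s+1) (s+2) := by rw [h1, one_mul]
          _ = algebraMap K A (α 0 (s+1))⁻¹ *
                (algebraMap K A (α 0 (s+1)) * g s (s+1) (s+2)) := by ring
          _ = _ := by rw [show algebraMap K A (α 0 (s+1)) * g s (s+1) (s+2)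
                = algebraMap K A (α (s+2) (s+1)) * g 0 s (s+1)
                  - algebraMap K A (α (s+1) s) * g 0 (s+1) (s+2) from by
                linear_combination key]
      rw [heq]
      exact Ideal.mul_mem_left _ _ (sub_mem
        (Ideal.mul_mem_left _ _ (Ideal.subset_span ⟨s, h1, by omega, rfl⟩))
        (Ideal.mul_mem_left _ _ (Ideal.subset_span ⟨s+1, by omega, by omega, rfl⟩)))
  · rw [Ideal.span_le]
    rintro x ⟨s, hs1, hs2, rfl⟩
    exact hmem s hs1 hs2
end

section
/- Let l_1 = (l_{11},...,l_{1 n_1}), ..., l_r = (l_{r1},...,l_{r n_r}) be tuples of positive integers. The family of vectors v_s := (0,...,0, l_s, −l_{s+1}, 0, ..., 0) in Z^{n_1+...+n_r}, for 1 ≤ s ≤ r−1, can be completed to a Z-basis of Z^{n_1+...+n_r} if and only if the numbers gcd(l_{k1},...,l_{k n_k}), for 1 ≤ k ≤ r, are pairwise coprime. -/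
/-!
Over a principal ideal domain, a finite family `v` in a free module `E` of finite rank extends to
a basis iff some linear map `Φ : E → R^ι` sends `v` to the standard basis: then `E` is the direct
sum of the span of `v` and `ker Φ`, and the latter is free.

Let `W t` be the vector with `l t` in block `t` and zero elsewhere, so `v s = W s - W (s + 1)`, and
let `g k` be the gcd of `l k`. A functional `ψ` always has `g k ∣ ψ (W k)`, and by Bézout any
values `ψ (W k)` subject to these divisibilities are attained. If `ψ (v t)` is `1` for `t = k`
and `0` otherwise, telescoping gives `ψ (W k) - ψ (W k') = 1` for `k < k'`, so `g k` and `g k'`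
are coprime. Conversely, for pairwise coprime `g` the Chinese remainder theorem gives `x` with
`x ≡ [k ≤ s] mod g k` for all `k`, and prescribing `ψ_s (W k) = [k ≤ s] - x` yields
`ψ_s (v t) = δ_st`.
-/

open Finset Function

section BasisExtension

variable {R E ι : Type*} [CommRing R] [IsDomain R] [IsPrincipalIdealRing R]
  [AddCommGroup E] [Module R E] [Module.Free R E] [Module.Finite R E] [Fintype ι] [DecidableEq ι]

theorem exists_basis_sum_inl_eq_iff (v : ι → E) :
    (∃ (m : ℕ) (b : Module.Basis (ι ⊕ Fin m) R E), ∀ s, b (Sum.inl s) = v s) ↔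
      ∃ Φ : E →ₗ[R] ι → R, ∀ t, Φ (v t) = Pi.single t 1 := by
  constructor
  · rintro ⟨m, b, hb⟩
    refine ⟨LinearMap.pi fun s => b.coord (Sum.inl s), fun t => funext fun s => ?_⟩
    simp [← hb, Pi.single_apply, Finsupp.single_apply, eq_comm]
  · rintro ⟨Φ, hΦ⟩
    have hli : LinearIndependent R v :=
      .of_comp Φ (by simpa [Function.comp_def, hΦ] using Pi.linearIndependent_single_one ι R)
    set bV := Module.Basis.span hli
    let π : E →ₗ[R] Submodule.span R (Set.range v) := bV.equivFun.symm.toLinearMap ∘ₗ Φ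
    have hπ : π ∘ₗ (Submodule.span R (Set.range v)).subtype = LinearMap.id := bV.ext fun i => by
      change bV.equivFun.symm (Φ (bV i : E)) = bV i
      rw [Module.Basis.coe_span_apply, hΦ, Basis.equivFun_symm_single]
    have hc := LinearMap.isCompl_of_proj fun x => by simpa using LinearMap.congr_fun hπ x
    obtain ⟨m, bK⟩ := Submodule.basisOfPid (Module.Free.chooseBasis R E) (LinearMap.ker π)
    exact ⟨m, (bV.prod bK).map (Submodule.prodEquivOfIsCompl _ _ hc), fun s => by simp [bV]⟩

end BasisExtension

theorem dvd_apply_of_forall_dvd {ι R : Type*} [CommSemiring R] (ψ : (ι → R) →ₗ[R] R) {d : R}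
    {x : ι → R} (h : ∀ i, d ∣ x i) : d ∣ ψ x := by
  choose y hy using h
  rw [show x = d • y from funext hy, map_smul, smul_eq_mul]
  exact dvd_mul_right d _

theorem exists_dvd_indicator_sub {ι R : Type*} [Fintype ι] [CommRing R] {g : ι → R}
    (hg : Pairwise (IsCoprime on g)) (p : ι → Prop) [DecidablePred p] :
    ∃ x : R, ∀ k, g k ∣ (if p k then 1 else 0) - x := by
  have hcop : IsCoprime (∏ k ∈ univ.filter p, g k) (∏ k ∈ univ.filter (¬ p ·), g k) :=
    IsCoprime.prod_left fun k hk => IsCoprime.prod_right fun k' hk' =>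
      hg fun h => (mem_filter.1 hk').2 (h ▸ (mem_filter.1 hk).2)
  obtain ⟨a, b, hab⟩ := hcop
  refine ⟨b * ∏ k ∈ univ.filter (¬ p ·), g k, fun k => ?_⟩
  by_cases hk : p k
  · rw [if_pos hk, ← hab, add_sub_cancel_right]
    exact (dvd_prod_of_mem g (by simpa using hk)).mul_left a
  · rw [if_neg hk, zero_sub, dvd_neg]
    exact (dvd_prod_of_mem g (by simpa using hk)).mul_left b

section Blocks

variable {r : ℕ} {κ : Fin r → Type*} (l : (k : Fin r) → κ k → ℤ)

/-- Indexed by `ℕ` so that the differences `blockVector l s - blockVector l (s + 1)` telescope;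
it vanishes for `t ≥ r`. -/
def blockVector (t : ℕ) : (Σ k, κ k) → ℤ := fun i => if (i.1 : ℕ) = t then l i.1 i.2 else 0

variable [∀ k, Fintype (κ k)]

theorem gcd_dvd_apply_blockVector (ψ : ((Σ k, κ k) → ℤ) →ₗ[ℤ] ℤ) (k : Fin r) :
    univ.gcd (l k) ∣ ψ (blockVector l k) := by
  refine dvd_apply_of_forall_dvd ψ fun ⟨a, j⟩ => ?_
  by_cases h : a = k
  · subst h
    simpa [blockVector] using gcd_dvd (mem_univ j)
  · simp [blockVector, Fin.val_inj, h]

theorem exists_apply_blockVector_eq (β : Fin r → ℤ) (hβ : ∀ k, univ.gcd (l k) ∣ β k) :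
    ∃ ψ : ((Σ k, κ k) → ℤ) →ₗ[ℤ] ℤ, ∀ k : Fin r, ψ (blockVector l k) = β k := by
  choose f hf using fun k => (univ : Finset (κ k)).gcd_eq_sum_mul (l k)
  refine ⟨Fintype.linearCombination ℤ fun i => β i.1 / univ.gcd (l i.1) * f i.1 i.2, fun k => ?_⟩
  rw [Fintype.linearCombination_apply, Fintype.sum_sigma, Fintype.sum_eq_single k]
  · simp only [blockVector, if_pos, smul_eq_mul]
    calc ∑ j, l k j * (β k / univ.gcd (l k) * f k j)
        = β k / univ.gcd (l k) * ∑ j, l k j * f k j := by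
          rw [mul_sum]; exact sum_congr rfl fun j _ => by ring
      _ = β k := by rw [← hf, Int.ediv_mul_cancel (hβ k)]
  · intro a ha
    simp [blockVector, Fin.val_inj, ha]

theorem isCoprime_gcd_of_lt {Φ : ((Σ k, κ k) → ℤ) →ₗ[ℤ] Fin (r - 1) → ℤ}
    (hΦ : ∀ t : Fin (r - 1), Φ (blockVector l t - blockVector l (t + 1)) = Pi.single t 1)
    {k k' : Fin r} (hkk' : k < k') : IsCoprime (univ.gcd (l k)) (univ.gcd (l k')) := by
  let ψ := LinearMap.proj (⟨k, by omega⟩ : Fin (r - 1)) ∘ₗ Φ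
  have hstep : ∀ t ∈ Ico (k : ℕ) k',
      ψ (blockVector l (t + 1)) - ψ (blockVector l t) = -if (k : ℕ) = t then 1 else 0 := by
    intro t ht
    have ht' : t < r - 1 := by simp only [mem_Ico] at ht; omega
    have := congr_fun (hΦ ⟨t, ht'⟩) ⟨k, by omega⟩
    simp only [map_sub, Pi.single_apply, Fin.ext_iff, Pi.sub_apply] at this
    simp only [ψ, LinearMap.comp_apply, LinearMap.proj_apply]
    rw [← neg_sub, this]
  have htel := sum_Ico_sub (f := fun t => ψ (blockVector l t)) hkk'.le
  rw [sum_congr rfl hstep, sum_neg_distrib, sum_ite_eq, if_pos (by simpa using hkk')] at htel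
  obtain ⟨x, hx⟩ := gcd_dvd_apply_blockVector l ψ k
  obtain ⟨y, hy⟩ := gcd_dvd_apply_blockVector l ψ k'
  exact ⟨x, -y, by linear_combination -hx + hy + htel⟩

theorem exists_linearMap_blockVector_sub_of_pairwise
    (hg : Pairwise (IsCoprime on fun k => univ.gcd (l k))) :
    ∃ Φ : ((Σ k, κ k) → ℤ) →ₗ[ℤ] Fin (r - 1) → ℤ,
      ∀ t : Fin (r - 1), Φ (blockVector l t - blockVector l (t + 1)) = Pi.single t 1 := by
  choose x hx using fun s : Fin (r - 1) => exists_dvd_indicator_sub hg fun k => (k : ℕ) ≤ s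
  choose ψ hψ using fun s => exists_apply_blockVector_eq l _ (hx s)
  refine ⟨LinearMap.pi ψ, fun t => funext fun s => ?_⟩
  have h0 := hψ s ⟨t, by omega⟩
  have h1 := hψ s ⟨t + 1, by omega⟩
  simp only at h0 h1
  rw [LinearMap.pi_apply, map_sub, h0, h1, Pi.single_apply]
  simp only [Fin.ext_iff]
  split_ifs <;> omega

theorem exists_linearMap_blockVector_sub_iff :
    (∃ Φ : ((Σ k, κ k) → ℤ) →ₗ[ℤ] Fin (r - 1) → ℤ,
        ∀ t : Fin (r - 1), Φ (blockVector l t - blockVector l (t + 1)) = Pi.single t 1) ↔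
      Pairwise (IsCoprime on fun k => univ.gcd (l k)) := by
  refine ⟨fun ⟨Φ, hΦ⟩ k k' hne => ?_, exists_linearMap_blockVector_sub_of_pairwise l⟩
  rcases hne.lt_or_gt with h | h
  · exact isCoprime_gcd_of_lt l hΦ h
  · exact (isCoprime_gcd_of_lt l hΦ h).symm

end Blocks

theorem stmt_5_general (r : ℕ) (n : Fin r → ℕ)
    (l : (k : Fin r) → Fin (n k) → ℤ)
    (v : Fin (r - 1) → ((Σ k : Fin r, Fin (n k)) → ℤ))
    (hv : ∀ (s : Fin (r - 1)) (k : Fin r) (j : Fin (n k)),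
      v s ⟨k, j⟩ =
        if k.1 = s.1 then l k j else if k.1 = s.1 + 1 then -(l k j) else 0) :
    (∃ (m : ℕ) (b : Module.Basis (Fin (r - 1) ⊕ Fin m) ℤ ((Σ k : Fin r, Fin (n k)) → ℤ)),
        ∀ s, b (Sum.inl s) = v s) ↔
      ∀ k k' : Fin r, k ≠ k' →
        IsCoprime (Finset.univ.gcd (l k)) (Finset.univ.gcd (l k')) := by
  have hvW : v = fun s : Fin (r - 1) => blockVector l s - blockVector l (s + 1 : ℕ) := by
    funext s ⟨k, j⟩
    simp only [hv, Pi.sub_apply, blockVector]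
    split_ifs <;> omega
  rw [exists_basis_sum_inl_eq_iff, hvW]
  exact exists_linearMap_blockVector_sub_iff l

/-- The vectors `v s` (block `s` equal to `l s`, block `s+1` equal to `-l (s+1)`, zero
elsewhere) can be completed to a `ℤ`-basis of `⊕ₖ ℤ^{n k}` iff the gcds of the tuples
`l k` are pairwise coprime. -/
theorem stmt_5 (r : ℕ) (hr : 1 ≤ r) (n : Fin r → ℕ) (hn : ∀ k, 1 ≤ n k)
    (l : (k : Fin r) → Fin (n k) → ℤ) (hl : ∀ k j, 0 < l k j)
    (v : Fin (r - 1) → ((Σ k : Fin r, Fin (n k)) → ℤ))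
    (hv : ∀ (s : Fin (r - 1)) (k : Fin r) (j : Fin (n k)),
      v s ⟨k, j⟩ =
        if k.1 = s.1 then l k j else if k.1 = s.1 + 1 then -(l k j) else 0) :
    (∃ (m : ℕ) (b : Module.Basis (Fin (r - 1) ⊕ Fin m) ℤ ((Σ k : Fin r, Fin (n k)) → ℤ)),
        ∀ s, b (Sum.inl s) = v s) ↔
      ∀ k k' : Fin r, k ≠ k' →
        IsCoprime (Finset.univ.gcd (l k)) (Finset.univ.gcd (l k')) :=
  stmt_5_general r n l v hv
end

section
/- Suppose positive integers l_{11} > l_{21} ≥ 2 are coprime, and positive integers w_{11}, w_{21} satisfy l_{11}·w_{11} = l_{21}·w_{21} = γ with γ < c + w_{11} + w_{21} for some positive integer c. Then w_{11} < 2c, w_{21} < 3c, l_{11} < 3c, l_{21} < 2c, and γ < 6c. -/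
theorem stmt_6 (c l₁₁ l₂₁ w₁₁ w₂₁ γ : ℕ)
    (hc : 0 < c) (hw₁₁ : 0 < w₁₁) (hw₂₁ : 0 < w₂₁)
    (hcop : Nat.Coprime l₁₁ l₂₁) (h2 : 2 ≤ l₂₁) (hlt : l₂₁ < l₁₁)
    (h₁ : l₁₁ * w₁₁ = γ) (h₂ : l₂₁ * w₂₁ = γ)
    (hγ : γ < c + w₁₁ + w₂₁) :
    w₁₁ < 2 * c ∧ w₂₁ < 3 * c ∧ l₁₁ < 3 * c ∧ l₂₁ < 2 * c ∧ γ < 6 * c := by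
  have hd1 : l₂₁ ∣ w₁₁ := (Nat.Coprime.dvd_of_dvd_mul_left hcop.symm ⟨w₂₁, by omega⟩)
  have hd2 : l₁₁ ∣ w₂₁ := (Nat.Coprime.dvd_of_dvd_mul_left hcop ⟨w₁₁, by omega⟩)
  have hle1 : l₂₁ ≤ w₁₁ := Nat.le_of_dvd hw₁₁ hd1
  have hle2 : l₁₁ ≤ w₂₁ := Nat.le_of_dvd hw₂₁ hd2
  have k1 : 3 * w₁₁ ≤ γ := by nlinarith
  have k2 : 2 * w₂₁ ≤ γ := by nlinarith
  have k3 : 2 * l₁₁ ≤ γ := by nlinarith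
  have k4 : 3 * l₂₁ ≤ γ := by nlinarith
  omega
end

section
/- Let l_0,...,l_r be pairwise coprime positive integers, w_0,...,w_r positive integers with l_i w_i = l_j w_j for all i,j, and μ a positive integer such that gcd(w_j : j ≠ i) divides μ for every i. Then w_i ≤ μ^r for every i. -/
/-!
Let `N` be the common value of `l i * w i` and `P = ∏ l k`. Every `l k` divides `N`, so by
coprimality `N = P * m`, hence `w j = (∏_{k ≠ j} l k) * m`. In particular `l k ∣ w j` for all
`j ≠ k`, and `l t * m ∣ w j` for all `j ≠ t`, so both divide the gcd of the `w j` with `j ≠ k`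
(resp. `j ≠ t`) and are at most `μ`. Choosing `t ≠ i`, `w i` is the product of the `r - 1`
factors `l k` with `k ≠ i, t` and the factor `l t * m`, each at most `μ`.
-/

open Finset

variable {ι : Type*} [Fintype ι] {l w : ι → ℕ}

theorem prod_dvd_of_forall_mul_eq {N : ℕ} (hcop : Pairwise fun i j ↦ (l i).Coprime (l j))
    (h : ∀ i, l i * w i = N) : ∏ k, l k ∣ N :=
  Fintype.prod_dvd_of_isRelPrime (hcop.mono fun _ _ ↦ Nat.coprime_iff_isRelPrime.mp)
    fun i ↦ ⟨w i, (h i).symm⟩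

theorem exists_eq_prod_erase_mul [DecidableEq ι] {N : ℕ}
    (hcop : Pairwise fun i j ↦ (l i).Coprime (l j)) (hl : ∀ i, 0 < l i)
    (h : ∀ i, l i * w i = N) : ∃ m, ∀ j, w j = (∏ k ∈ univ.erase j, l k) * m := by
  obtain ⟨m, hm⟩ := prod_dvd_of_forall_mul_eq hcop h
  refine ⟨m, fun j ↦ Nat.eq_of_mul_eq_mul_left (hl j) ?_⟩
  rw [h j, hm, ← mul_prod_erase univ l (mem_univ j), mul_assoc]

theorem le_of_forall_dvd_of_gcd_erase_dvd [DecidableEq ι] {μ d : ℕ} {t : ι} (hμ : 0 < μ)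
    (hgcd : (univ.erase t).gcd w ∣ μ) (hd : ∀ j ≠ t, d ∣ w j) : d ≤ μ :=
  Nat.le_of_dvd hμ ((dvd_gcd fun j hj ↦ hd j (ne_of_mem_erase hj)).trans hgcd)

section ProdEraseMul

variable [DecidableEq ι] {m : ℕ} (hm : ∀ j, w j = (∏ k ∈ univ.erase j, l k) * m)
include hm

theorem dvd_of_eq_prod_erase_mul {j k : ι} (hjk : j ≠ k) : l k ∣ w j :=
  hm j ▸ (dvd_prod_of_mem l (mem_erase.mpr ⟨hjk.symm, mem_univ k⟩)).mul_right m

theorem mul_dvd_of_eq_prod_erase_mul {j t : ι} (hjt : j ≠ t) : l t * m ∣ w j := by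
  rw [hm j, ← mul_prod_erase _ l (mem_erase.mpr ⟨hjt.symm, mem_univ t⟩), mul_right_comm]
  exact dvd_mul_right _ _

theorem le_pow_of_eq_prod_erase_mul {μ : ℕ} {i t : ι} (hti : t ≠ i) (hlμ : ∀ k, l k ≤ μ)
    (hmμ : l t * m ≤ μ) : w i ≤ μ ^ (Fintype.card ι - 1) := by
  have ht : t ∈ univ.erase i := mem_erase.mpr ⟨hti, mem_univ t⟩
  have hcard : #((univ.erase i).erase t) + 1 = Fintype.card ι - 1 := by
    rw [card_erase_add_one ht, card_erase_of_mem (mem_univ i), card_univ]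
  calc w i = (∏ k ∈ (univ.erase i).erase t, l k) * (l t * m) := by
        rw [hm i, ← mul_prod_erase _ l ht]; ring
    _ ≤ μ ^ #((univ.erase i).erase t) * μ :=
        Nat.mul_le_mul (prod_le_pow_card _ _ _ fun k _ ↦ hlμ k) hmμ
    _ = μ ^ (Fintype.card ι - 1) := by rw [← pow_succ, hcard]

end ProdEraseMul

theorem stmt_9_general (r : ℕ) (l w : Fin (r + 1) → ℕ) (μ : ℕ) (hμ : 0 < μ)
    (hl : ∀ i, 0 < l i)
    (hcop : ∀ i j : Fin (r + 1), i ≠ j → Nat.Coprime (l i) (l j))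
    (h : ∀ i j : Fin (r + 1), l i * w i = l j * w j)
    (hgcd : ∀ i : Fin (r + 1), (Finset.univ.erase i).gcd w ∣ μ) :
    ∀ i, w i ≤ μ ^ r := by
  intro i
  obtain ⟨m, hm⟩ := exists_eq_prod_erase_mul hcop hl (h · i)
  obtain ⟨t, hti⟩ : ∃ t, t ≠ i := by
    by_contra! hall
    have hgcd_zero : (univ.erase i).gcd w = 0 := by
      rw [eq_empty_of_forall_notMem fun j hj ↦ ne_of_mem_erase hj (hall j), gcd_empty]
    exact hμ.ne' (zero_dvd_iff.mp (hgcd_zero ▸ hgcd i))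
  have hlμ (k) : l k ≤ μ :=
    le_of_forall_dvd_of_gcd_erase_dvd hμ (hgcd k) fun _ ↦ dvd_of_eq_prod_erase_mul hm
  have hmμ : l t * m ≤ μ :=
    le_of_forall_dvd_of_gcd_erase_dvd hμ (hgcd t) fun _ ↦ mul_dvd_of_eq_prod_erase_mul hm
  simpa using le_pow_of_eq_prod_erase_mul hm hti hlμ hmμ

theorem stmt_9 (r : ℕ) (l w : Fin (r + 1) → ℕ) (μ : ℕ) (hμ : 0 < μ)
    (hl : ∀ i, 0 < l i) (hw : ∀ i, 0 < w i)
    (hcop : ∀ i j : Fin (r + 1), i ≠ j → Nat.Coprime (l i) (l j))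
    (h : ∀ i j : Fin (r + 1), l i * w i = l j * w j)
    (hgcd : ∀ i : Fin (r + 1), (Finset.univ.erase i).gcd w ∣ μ) :
    ∀ i, w i ≤ μ ^ r :=
  stmt_9_general r l w μ hμ hl hcop h hgcd
end
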